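/- Let E be a finite-dimensional real inner product space (the parameter space), Z a real normed vector space (the data space), n ≥ 1, γ > 0, and let z, z' : Fin n → Z be the points of datasets D₁ and D₂ with averaged Hungarian distance d(D₁, D₂) = min over permutations π of (1/n)·Σ_i ‖z(i) − z'(π(i))‖. Let ℓ : E → Z → ℝ and define the regularized empirical losses L_{D}(θ) = (1/n)·Σ_i ℓ(θ, z_i) + γ‖θ‖² for each dataset D. Suppose: (i) z ↦ ℓ(θ₁, z) is Lipschitz with constant L ≥ 0; (ii) θ₁ is a global minimizer of L_{D₁} and θ₂ is a global minimizer of L_{D₂}; (iii) L_{D₂} admits the exact expansion L_{D₂}(θ₁) = L_{D₂}(θ₂) + (1/2)·⟨θ₁ − θ₂, H(θ₁ − θ₂)⟩ with H symmetric and ⟨v, Hv⟩ ≥ 2γ‖v‖² for all v; and (iv) L_{D₁}(θ₁) ≥ L_{D₂}(θ₂). Then ‖θ₂ − θ₁‖ ≤ sqrt( L · d(D₁, D₂) / γ ) + sqrt( (L_{D₁}(θ₁) − L_{D₂}(θ₂)) / γ ). -/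

import Mathlib

/-! The quadratic expansion of `L₂` at `θ₂`, with curvature at least `2γ`, gives
`γ ‖θ₁ - θ₂‖² ≤ L₂ θ₁ - L₂ θ₂`. Evaluating the loss at `θ₁` on an optimal matching of the two
datasets and using the data-Lipschitz bound pointwise gives `L₂ θ₁ ≤ L₁ θ₁ + L · d(D₁, D₂)`.
Hence `‖θ₁ - θ₂‖² ≤ (L · d(D₁, D₂) + L₁ θ₁ - L₂ θ₂) / γ`, and `√(a + b) ≤ √a + √b` splits the
root. -/

open Finset

-- No sign conditions are needed: `√` is `0` on negative numbers.
theorem Real.sqrt_add_le_sqrt_add_sqrt (x y : ℝ) : √(x + y) ≤ √x + √y := by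
  rcases lt_or_ge x 0 with hx | hx
  · calc √(x + y) ≤ √y := Real.sqrt_le_sqrt (by linarith)
      _ ≤ √x + √y := le_add_of_nonneg_left (Real.sqrt_nonneg x)
  rcases lt_or_ge y 0 with hy | hy
  · calc √(x + y) ≤ √x := Real.sqrt_le_sqrt (by linarith)
      _ ≤ √x + √y := le_add_of_nonneg_right (Real.sqrt_nonneg y)
  rw [Real.sqrt_le_left (by positivity)]
  nlinarith [Real.sq_sqrt hx, Real.sq_sqrt hy, mul_nonneg (Real.sqrt_nonneg x) (Real.sqrt_nonneg y)]

section Matching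

variable {Z : Type*} [SeminormedAddCommGroup Z]

theorem sum_le_sum_add_mul_sum_norm_sub_comp_perm {ι : Type*} [Fintype ι] {g : Z → ℝ} {L : ℝ}
    (hg : ∀ a b, |g a - g b| ≤ L * ‖a - b‖) (x y : ι → Z) (σ : Equiv.Perm ι) :
    ∑ i, g (y i) ≤ ∑ i, g (x i) + L * ∑ i, ‖x i - y (σ i)‖ := by
  rw [← Equiv.sum_comp σ (fun i => g (y i)), mul_sum, ← sum_add_distrib]
  gcongr with i
  have hi := (abs_le.mp (hg (y (σ i)) (x i))).2
  rw [norm_sub_rev] at hi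
  linarith

variable {n : ℕ}

noncomputable def hungarianDist (z z' : Fin n → Z) : ℝ :=
  ⨅ π : Equiv.Perm (Fin n), (1 / (n : ℝ)) * ∑ i, ‖z i - z' (π i)‖

theorem exists_perm_hungarianDist_eq (z z' : Fin n → Z) :
    ∃ π : Equiv.Perm (Fin n), (1 / (n : ℝ)) * ∑ i, ‖z i - z' (π i)‖ = hungarianDist z z' :=
  exists_eq_ciInf_of_finite

theorem average_le_average_add_mul_hungarianDist {g : Z → ℝ} {L : ℝ}
    (hg : ∀ a b, |g a - g b| ≤ L * ‖a - b‖) (z z' : Fin n → Z) :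
    (1 / (n : ℝ)) * ∑ i, g (z' i) ≤ (1 / (n : ℝ)) * ∑ i, g (z i) + L * hungarianDist z z' := by
  obtain ⟨π, hπ⟩ := exists_perm_hungarianDist_eq z z'
  rw [← hπ, mul_left_comm, ← mul_add]
  gcongr
  exact sum_le_sum_add_mul_sum_norm_sub_comp_perm hg z z' π

end Matching

theorem parameter_shift_bound_general {E : Type*} [NormedAddCommGroup E] [InnerProductSpace ℝ E]
    {Z : Type*} [NormedAddCommGroup Z]
    (n : ℕ) (γ : ℝ) (hγ : 0 < γ) (z z' : Fin n → Z)
    (ℓ : E → Z → ℝ) (L : ℝ)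
    (θ₁ θ₂ : E)
    -- the regularized empirical losses on the two datasets
    (L₁ L₂ : E → ℝ)
    (hL₁ : ∀ θ : E, L₁ θ = (1 / (n : ℝ)) * ∑ i, ℓ θ (z i) + γ * ‖θ‖ ^ 2)
    (hL₂ : ∀ θ : E, L₂ θ = (1 / (n : ℝ)) * ∑ i, ℓ θ (z' i) + γ * ‖θ‖ ^ 2)
    -- (i) data-Lipschitzness of the loss at θ₁
    (hLip : ∀ a b : Z, |ℓ θ₁ a - ℓ θ₁ b| ≤ L * ‖a - b‖)
    -- (iii) exact locally quadratic expansion of L₂ around θ₂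
    (H : E →ₗ[ℝ] E)
    (hpos : ∀ v : E, (inner ℝ v (H v) : ℝ) ≥ 2 * γ * ‖v‖ ^ 2)
    (hexp : L₂ θ₁ = L₂ θ₂ + (1 / 2) * (inner ℝ (θ₁ - θ₂) (H (θ₁ - θ₂)) : ℝ)) :
    ‖θ₂ - θ₁‖ ≤
      Real.sqrt (L * (⨅ π : Equiv.Perm (Fin n),
          (1 / (n : ℝ)) * ∑ i, ‖z i - z' (π i)‖) / γ) +
        Real.sqrt ((L₁ θ₁ - L₂ θ₂) / γ) := by
  change _ ≤ √(L * hungarianDist z z' / γ) + _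
  have hgrowth : γ * ‖θ₁ - θ₂‖ ^ 2 ≤ L₂ θ₁ - L₂ θ₂ := by
    linarith [hpos (θ₁ - θ₂)]
  have htransport : L₂ θ₁ ≤ L₁ θ₁ + L * hungarianDist z z' := by
    rw [hL₁, hL₂]
    linarith [average_le_average_add_mul_hungarianDist hLip z z']
  have hsq : ‖θ₂ - θ₁‖ ^ 2 ≤ L * hungarianDist z z' / γ + (L₁ θ₁ - L₂ θ₂) / γ := by
    rw [norm_sub_rev, ← add_div, le_div_iff₀ hγ]
    linarith
  calc ‖θ₂ - θ₁‖ ≤ √(L * hungarianDist z z' / γ + (L₁ θ₁ - L₂ θ₂) / γ) :=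
        Real.le_sqrt_of_sq_le hsq
    _ ≤ _ := Real.sqrt_add_le_sqrt_add_sqrt _ _

/-- Theorem 1 of the paper: bound on the parameter shift between the global
minimizers of weight-decay-regularized empirical losses on two datasets, in terms of the
loss's data-Lipschitz constant, the Hungarian distance between the datasets, and the
weight-decay coefficient `γ`. -/
theorem parameter_shift_bound {E : Type*} [NormedAddCommGroup E] [InnerProductSpace ℝ E]
    [FiniteDimensional ℝ E] {Z : Type*} [NormedAddCommGroup Z] [NormedSpace ℝ Z]
    (n : ℕ) (hn : 1 ≤ n) (γ : ℝ) (hγ : 0 < γ) (z z' : Fin n → Z)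
    (ℓ : E → Z → ℝ) (L : ℝ) (hL : 0 ≤ L)
    (θ₁ θ₂ : E)
    -- the regularized empirical losses on the two datasets
    (L₁ L₂ : E → ℝ)
    (hL₁ : ∀ θ : E, L₁ θ = (1 / (n : ℝ)) * ∑ i, ℓ θ (z i) + γ * ‖θ‖ ^ 2)
    (hL₂ : ∀ θ : E, L₂ θ = (1 / (n : ℝ)) * ∑ i, ℓ θ (z' i) + γ * ‖θ‖ ^ 2)
    -- (i) data-Lipschitzness of the loss at θ₁
    (hLip : ∀ a b : Z, |ℓ θ₁ a - ℓ θ₁ b| ≤ L * ‖a - b‖)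
    -- (ii) global optimality
    (hopt₁ : ∀ θ : E, L₁ θ₁ ≤ L₁ θ)
    (hopt₂ : ∀ θ : E, L₂ θ₂ ≤ L₂ θ)
    -- (iii) exact locally quadratic expansion of L₂ around θ₂
    (H : E →ₗ[ℝ] E)
    (hsym : ∀ u v : E, (inner ℝ (H u) v : ℝ) = inner ℝ u (H v))
    (hpos : ∀ v : E, (inner ℝ v (H v) : ℝ) ≥ 2 * γ * ‖v‖ ^ 2)
    (hexp : L₂ θ₁ = L₂ θ₂ + (1 / 2) * (inner ℝ (θ₁ - θ₂) (H (θ₁ - θ₂)) : ℝ))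
    -- (iv) the optimal values are ordered
    (hord : L₁ θ₁ ≥ L₂ θ₂) :
    ‖θ₂ - θ₁‖ ≤
      Real.sqrt (L * (⨅ π : Equiv.Perm (Fin n),
          (1 / (n : ℝ)) * ∑ i, ‖z i - z' (π i)‖) / γ) +
        Real.sqrt ((L₁ θ₁ - L₂ θ₂) / γ) :=
  parameter_shift_bound_general n γ hγ z z' ℓ L θ₁ θ₂ L₁ L₂ hL₁ hL₂ hLip H hpos hexp
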